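/- For every dimension d ≥ 1, every p ∈ (1,∞) with Hölder conjugate q = p/(p−1) and every α > d/q, letting 𝒮𝓑₀(ε) = ∫_{ℝ^d} (∫₀^{1/ε} s^{α−1} (1+s)^{−d} exp(−|y|²/(2(1+s))) ds)^{p/2} dy, there exist constants 0 < c ≤ C (depending only on α, p and d) such that for all sufficiently small ε > 0, c ≤ ε^{p(α − d/q)/2} 𝒮𝓑₀(ε) ≤ C; in particular ε^{(α − d/q)/2} 𝒮𝓑₀(ε)^{1/p} is bounded above and below by positive constants as ε → 0⁺. -/

import Mathlib

open MeasureTheory ProbabilityTheory Real Filter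
open scoped ENNReal Topology Classical

noncomputable section

abbrev Esp (d : ℕ) := EuclideanSpace ℝ (Fin d)

/-- `𝒮𝓑₀(ε, α, p, d)`. -/
def SB0 (d : ℕ) (α p ε : ℝ) : ℝ :=
  ∫ y : Esp d, (∫ s in Set.Ioc (0 : ℝ) (1 / ε),
      s ^ (α - 1) * (1 + s) ^ (-(d : ℝ)) * Real.exp (-‖y‖ ^ 2 / (2 * (1 + s)))) ^ (p / 2)

/-! Put `T = 1 / ε`, `θ = p / 2`, and let `I_T(y)` be the inner integral, so that
`𝒮𝓑₀(ε) = ∫ I_T ^ θ` and the claim is `∫ I_T ^ θ ≍ T ^ E` with `E = θ (α - d) + d / 2`; the hypothesis `α > d / q` is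
exactly `E > 0`.

For the lower bound, the window `s ∈ [T/2, T]` gives `I_T(y) ≳ T ^ (α - d)` on the ball `|y|² ≤ T`,
whose volume is `≍ T ^ (d/2)`. For the upper bound there are three regimes.
If `α > d`, then `I_T(y) ≲ T ^ (α - d) e^{-|y|²/(2(1+T))}` and a Gaussian integral finishes.
If `θ ≥ 1`, Hölder's inequality in `s` against `w(s) = s^(α-1) (1+s)^(-(d - d/(2θ)))` makes the
`y`-integral of each slice an exact Gaussian integral proportional to `w(s)`.
If `θ < 1` and `α ≤ d`, the explicit lower bound `G(y) ≍ (1+|y|²)^(α-d) e^{-|y|²/(2+T)} ≤ I_T(y)`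
gives `I_T ^ θ ≤ I_T G ^ (θ-1)`, which is linear in `I_T`; after Fubini one needs a polynomially
weighted Gaussian integral in `y` and a one-dimensional integral in `s`. -/

open Set

lemma integrableOn_rpow_mul_one_add_rpow {a : ℝ} (b : ℝ) {T : ℝ} (ha : -1 < a) (hT : 0 ≤ T) :
    IntegrableOn (fun s : ℝ => s ^ a * (1 + s) ^ b) (Ioc 0 T) := by
  have hpow : IntegrableOn (fun s : ℝ => s ^ a) (Ioc 0 T) :=
    (intervalIntegrable_iff_integrableOn_Ioc_of_le hT).1
      (intervalIntegral.intervalIntegrable_rpow' ha)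
  refine hpow.mul_continuousOn_of_subset ?_ measurableSet_Ioc isCompact_Icc Ioc_subset_Icc_self
  exact ContinuousOn.rpow_const (by fun_prop) fun s hs => Or.inl (by linarith [hs.1])

lemma setIntegral_rpow_mul_one_add_rpow_le {a δ β T : ℝ} (ha : 0 < a) (hδ : 0 ≤ δ) (hβ : 0 < β)
    (haβ : a - δ ≤ β) (hT : 1 ≤ T) :
    ∫ s in Ioc 0 T, s ^ (a - 1) * (1 + s) ^ (-δ) ≤ (1 / a + 1 / β) * T ^ β := by
  set f : ℝ → ℝ := fun s => s ^ (a - 1) * (1 + s) ^ (-δ)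
  have hf : ∀ {x y : ℝ}, 0 ≤ x → x ≤ y → IntervalIntegrable f volume x y := fun hx hxy =>
    ((intervalIntegrable_iff_integrableOn_Ioc_of_le hxy).2
      ((integrableOn_rpow_mul_one_add_rpow (-δ) (by linarith) (hx.trans hxy)).mono_set
        (Ioc_subset_Ioc_left hx)))
  have hnear : ∫ s in (0 : ℝ)..1, f s ≤ 1 / a := by
    calc ∫ s in (0 : ℝ)..1, f s ≤ ∫ s in (0 : ℝ)..1, s ^ (a - 1) := by
          refine intervalIntegral.integral_mono_on zero_le_one (hf le_rfl zero_le_one)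
            (intervalIntegral.intervalIntegrable_rpow' (by linarith)) fun s hs => ?_
          exact mul_le_of_le_one_right (rpow_nonneg hs.1 _)
            (rpow_le_one_of_one_le_of_nonpos (by linarith [hs.1]) (by linarith))
      _ = 1 / a := by
          rw [integral_rpow (Or.inl (by linarith)), sub_add_cancel, one_rpow,
            zero_rpow ha.ne']
          ring
  have hfar : ∫ s in (1 : ℝ)..T, f s ≤ T ^ β / β := by
    calc ∫ s in (1 : ℝ)..T, f s ≤ ∫ s in (1 : ℝ)..T, s ^ (β - 1) := by
          refine intervalIntegral.integral_mono_on hT (hf zero_le_one hT)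
            (intervalIntegral.intervalIntegrable_rpow' (by linarith)) fun s hs => ?_
          have hs0 : 0 < s := by linarith [hs.1]
          calc f s ≤ s ^ (a - 1) * s ^ (-δ) :=
                mul_le_mul_of_nonneg_left (rpow_le_rpow_of_nonpos hs0 (by linarith) (by linarith))
                  (rpow_nonneg hs0.le _)
            _ = s ^ (a - 1 - δ) := by rw [← rpow_add hs0]; ring_nf
            _ ≤ s ^ (β - 1) := rpow_le_rpow_of_exponent_le hs.1 (by linarith)
      _ = (T ^ β - 1) / β := by
          rw [integral_rpow (Or.inl (by linarith)), sub_add_cancel, one_rpow]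
      _ ≤ T ^ β / β := by gcongr; linarith
  have hTβ : 1 ≤ T ^ β := one_le_rpow hT hβ.le
  rw [← intervalIntegral.integral_of_le (by linarith),
    ← intervalIntegral.integral_add_adjacent_intervals (hf le_rfl zero_le_one)
      (hf zero_le_one hT)]
  calc _ ≤ 1 / a + T ^ β / β := add_le_add hnear hfar
    _ ≤ 1 / a * T ^ β + T ^ β / β := by gcongr; exact le_mul_of_one_le_right (by positivity) hTβ
    _ = (1 / a + 1 / β) * T ^ β := by ring

lemma lintegral_rpow_mul_one_add_rpow_le {a δ β T : ℝ} (ha : 0 < a) (hδ : 0 ≤ δ) (hβ : 0 < β)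
    (haβ : a - δ ≤ β) (hT : 1 ≤ T) :
    ∫⁻ s in Ioc 0 T, ENNReal.ofReal (s ^ (a - 1) * (1 + s) ^ (-δ))
      ≤ ENNReal.ofReal ((1 / a + 1 / β) * T ^ β) := by
  rw [← ofReal_integral_eq_lintegral_ofReal
    (integrableOn_rpow_mul_one_add_rpow _ (by linarith) (by linarith))
    (ae_restrict_of_forall_mem measurableSet_Ioc fun s hs => by
      have := hs.1; positivity)]
  exact ENNReal.ofReal_le_ofReal (setIntegral_rpow_mul_one_add_rpow_le ha hδ hβ haβ hT)

lemma one_add_rpow_le_mul_exp {κ v : ℝ} (hκ : 0 ≤ κ) (hv : 0 ≤ v) :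
    (1 + v) ^ κ ≤ (2 * max κ 1) ^ κ * exp (v / 2) := by
  set m := max κ 1
  have hm : 1 ≤ m := le_max_right _ _
  have hlin : 1 + v ≤ 2 * m * exp (v / (2 * m)) := by
    calc 1 + v ≤ 2 * m * (v / (2 * m) + 1) := by field_simp; linarith
      _ ≤ 2 * m * exp (v / (2 * m)) := by gcongr; exact add_one_le_exp _
  calc (1 + v) ^ κ ≤ (2 * m * exp (v / (2 * m))) ^ κ := by gcongr
    _ = (2 * m) ^ κ * exp (κ * (v / (2 * m))) := by
        rw [mul_rpow (by positivity) (exp_pos _).le, ← exp_mul, mul_comm (v / _)]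
    _ ≤ (2 * m) ^ κ * exp (v / 2) := by
        gcongr
        rw [mul_div, div_le_div_iff₀ (by positivity) two_pos]
        nlinarith [le_max_left κ 1]

lemma one_add_rpow_mul_exp_le {κ c σ u : ℝ} (hκ : 0 ≤ κ) (hc : 0 < c) (hσ : 1 ≤ σ) (hu : 0 ≤ u) :
    (1 + u) ^ κ * exp (-(c / σ) * u)
      ≤ (2 * max κ 1) ^ κ * (1 + 1 / c) ^ κ * σ ^ κ * exp (-(c / σ / 2) * u) := by
  have hσ0 : 0 < σ := by linarith
  -- `1 + u ≤ σ (1 + 1/c) (1 + (c/σ) u)` absorbs the polynomial into half of the Gaussian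
  have hsplit : 1 + u ≤ σ * (1 + 1 / c) * (1 + c / σ * u) := by
    have : σ * (1 + 1 / c) * (1 + c / σ * u) = σ * (1 + 1 / c) + (c + 1) * u := by
      field_simp
    rw [this]
    nlinarith [one_div_pos.2 hc]
  have hpoly : (1 + u) ^ κ ≤ (σ * (1 + 1 / c)) ^ κ * ((2 * max κ 1) ^ κ * exp (c / σ * u / 2)) :=
    calc (1 + u) ^ κ ≤ (σ * (1 + 1 / c) * (1 + c / σ * u)) ^ κ :=
          rpow_le_rpow (by positivity) hsplit hκ
      _ ≤ _ := by
          rw [mul_rpow (by positivity) (by positivity)]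
          gcongr
          exact one_add_rpow_le_mul_exp hκ (by positivity)
  have hexp : exp (c / σ * u / 2) * exp (-(c / σ) * u) = exp (-(c / σ / 2) * u) := by
    rw [← exp_add]; ring_nf
  calc (1 + u) ^ κ * exp (-(c / σ) * u)
      ≤ (σ * (1 + 1 / c)) ^ κ * ((2 * max κ 1) ^ κ * exp (c / σ * u / 2))
          * exp (-(c / σ) * u) := by gcongr
    _ = _ := by
        rw [mul_rpow hσ0.le (by positivity)]
        linear_combination ((1 + 1 / c) ^ κ * σ ^ κ * (2 * max κ 1) ^ κ) * hexp

section Gaussian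

variable {V : Type*} [NormedAddCommGroup V] [InnerProductSpace ℝ V] [FiniteDimensional ℝ V]
  [MeasurableSpace V] [BorelSpace V]

lemma lintegral_exp_neg_mul_norm_sq {b : ℝ} (hb : 0 < b) :
    ∫⁻ v : V, ENNReal.ofReal (exp (-b * ‖v‖ ^ 2))
      = ENNReal.ofReal ((π / b) ^ ((Module.finrank ℝ V : ℝ) / 2)) := by
  have h := GaussianFourier.integral_rexp_neg_mul_sq_norm (V := V) hb
  have hint : Integrable (fun v : V => exp (-b * ‖v‖ ^ 2)) :=
    .of_integral_ne_zero (by rw [h]; positivity)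
  rw [← h, ofReal_integral_eq_lintegral_ofReal hint (ae_of_all _ fun _ => (exp_pos _).le)]

lemma exists_lintegral_one_add_norm_sq_rpow_mul_exp_le {κ c : ℝ} (hκ : 0 ≤ κ) (hc : 0 < c) :
    ∃ K : ℝ, 0 < K ∧ ∀ σ : ℝ, 1 ≤ σ →
      ∫⁻ v : V, ENNReal.ofReal ((1 + ‖v‖ ^ 2) ^ κ * exp (-(c / σ) * ‖v‖ ^ 2))
        ≤ ENNReal.ofReal (K * σ ^ (κ + (Module.finrank ℝ V : ℝ) / 2)) := by
  set n : ℝ := (Module.finrank ℝ V : ℝ)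
  set A := (2 * max κ 1) ^ κ * (1 + 1 / c) ^ κ
  refine ⟨A * (2 * π / c) ^ (n / 2), by positivity, fun σ hσ => ?_⟩
  have hσ0 : 0 < σ := by linarith
  calc ∫⁻ v : V, ENNReal.ofReal ((1 + ‖v‖ ^ 2) ^ κ * exp (-(c / σ) * ‖v‖ ^ 2))
      ≤ ∫⁻ v : V, ENNReal.ofReal (A * σ ^ κ) * ENNReal.ofReal (exp (-(c / σ / 2) * ‖v‖ ^ 2)) :=
        lintegral_mono fun v => by
          rw [← ENNReal.ofReal_mul (by positivity)]
          exact ENNReal.ofReal_le_ofReal (one_add_rpow_mul_exp_le hκ hc hσ (by positivity))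
    _ = ENNReal.ofReal (A * σ ^ κ * (π / (c / σ / 2)) ^ (n / 2)) := by
        rw [lintegral_const_mul' _ _ ENNReal.ofReal_ne_top,
          lintegral_exp_neg_mul_norm_sq (by positivity), ← ENNReal.ofReal_mul (by positivity)]
    _ = ENNReal.ofReal (A * (2 * π / c) ^ (n / 2) * σ ^ (κ + n / 2)) := by
        rw [show π / (c / σ / 2) = 2 * π / c * σ by field_simp,
          mul_rpow (by positivity) hσ0.le, rpow_add hσ0]
        ring_nf

end Gaussian

lemma lintegral_rpow_le_lintegral_mul_rpow {X : Type*} [MeasurableSpace X] {μ : Measure X}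
    {F W : X → ℝ≥0∞} (hF : AEMeasurable F μ) (hW : AEMeasurable W μ)
    (hW0 : ∀ᵐ x ∂μ, W x ≠ 0) (hWtop : ∀ᵐ x ∂μ, W x ≠ ⊤) {θ : ℝ} (hθ : 1 ≤ θ) :
    (∫⁻ x, F x ∂μ) ^ θ
      ≤ (∫⁻ x, F x ^ θ * W x ^ (1 - θ) ∂μ) * (∫⁻ x, W x ∂μ) ^ (θ - 1) := by
  have hθ0 : 0 < θ := by linarith
  have hF_eq : ∀ᵐ x ∂μ, (F x ^ θ * W x ^ (1 - θ)) ^ θ⁻¹ * W x ^ (1 - θ⁻¹) = F x := by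
    filter_upwards [hW0, hWtop] with x h0 htop
    rw [ENNReal.mul_rpow_of_nonneg _ _ (by positivity), ← ENNReal.rpow_mul, ← ENNReal.rpow_mul,
      mul_assoc, ← ENNReal.rpow_add _ _ h0 htop, mul_inv_cancel₀ hθ0.ne', ENNReal.rpow_one]
    convert mul_one (F x)
    convert ENNReal.rpow_zero using 2
    field_simp
    ring
  have holder := ENNReal.lintegral_mul_norm_pow_le (f := fun x => F x ^ θ * W x ^ (1 - θ))
    ((hF.pow_const θ).mul (hW.pow_const _)) hW
    (inv_nonneg.2 hθ0.le) (sub_nonneg.2 (inv_le_one_of_one_le₀ hθ)) (add_sub_cancel _ _)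
  rw [lintegral_congr_ae hF_eq] at holder
  calc (∫⁻ x, F x ∂μ) ^ θ
      ≤ ((∫⁻ x, F x ^ θ * W x ^ (1 - θ) ∂μ) ^ θ⁻¹ * (∫⁻ x, W x ∂μ) ^ (1 - θ⁻¹)) ^ θ :=
        ENNReal.rpow_le_rpow holder hθ0.le
    _ = _ := by
        rw [ENNReal.mul_rpow_of_nonneg _ _ hθ0.le, ← ENNReal.rpow_mul, ← ENNReal.rpow_mul,
          inv_mul_cancel₀ hθ0.ne', ENNReal.rpow_one]
        congr 2
        field_simp

namespace SB0

open Metric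

def integrand (d : ℕ) (α : ℝ) (y : Esp d) (s : ℝ) : ℝ :=
  s ^ (α - 1) * (1 + s) ^ (-(d : ℝ)) * exp (-‖y‖ ^ 2 / (2 * (1 + s)))

def innerIntegral (d : ℕ) (α T : ℝ) (y : Esp d) : ℝ :=
  ∫ s in Ioc 0 T, integrand d α y s

def outerLIntegral (d : ℕ) (α θ T : ℝ) : ℝ≥0∞ :=
  ∫⁻ y : Esp d, ENNReal.ofReal (innerIntegral d α T y ^ θ)

variable {d : ℕ} {α : ℝ}

lemma integrand_nonneg (y : Esp d) {s : ℝ} (hs : 0 ≤ s) : 0 ≤ integrand d α y s := by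
  unfold integrand; positivity

lemma measurable_integrand_uncurry :
    Measurable fun z : Esp d × ℝ => integrand d α z.1 z.2 := by
  unfold integrand; fun_prop

lemma integrableOn_integrand (hα : 0 < α) (y : Esp d) {T : ℝ} (hT : 0 ≤ T) :
    IntegrableOn (integrand d α y) (Ioc 0 T) := by
  refine (integrableOn_rpow_mul_one_add_rpow (-(d : ℝ)) (by linarith) hT).mul_continuousOn_of_subset
    ?_ measurableSet_Ioc isCompact_Icc Ioc_subset_Icc_self
  exact ContinuousOn.rexp (continuousOn_const.div (by fun_prop) fun s hs => by
    linarith [hs.1])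

lemma innerIntegral_nonneg (T : ℝ) (y : Esp d) : 0 ≤ innerIntegral d α T y :=
  setIntegral_nonneg measurableSet_Ioc fun _ hs => integrand_nonneg y hs.1.le

lemma measurable_innerIntegral (T : ℝ) : Measurable (innerIntegral d α T) :=
  (measurable_integrand_uncurry.stronglyMeasurable.integral_prod_right'
    (ν := volume.restrict (Ioc 0 T))).measurable

lemma ofReal_innerIntegral (hα : 0 < α) {T : ℝ} (hT : 0 ≤ T) (y : Esp d) :
    ENNReal.ofReal (innerIntegral d α T y) = ∫⁻ s in Ioc 0 T, ENNReal.ofReal (integrand d α y s) :=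
  ofReal_integral_eq_lintegral_ofReal (integrableOn_integrand hα y hT)
    (ae_restrict_of_forall_mem measurableSet_Ioc fun _ hs => integrand_nonneg y hs.1.le)

lemma SB0_eq_toReal_outerLIntegral (p : ℝ) {ε : ℝ} :
    SB0 d α p ε = (outerLIntegral d α (p / 2) (1 / ε)).toReal :=
  integral_eq_lintegral_of_nonneg_ae (ae_of_all _ fun _ => rpow_nonneg (innerIntegral_nonneg _ _) _)
    ((measurable_innerIntegral _).pow_const _).aestronglyMeasurable

lemma min_one_two_rpow_mul_rpow_le (r : ℝ) {a s : ℝ} (ha : 0 < a) (has : a ≤ s) (hs : s ≤ 2 * a) :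
    min 1 (2 ^ r) * a ^ r ≤ s ^ r := by
  rcases le_total 0 r with hr | hr
  · exact (mul_le_of_le_one_left (by positivity) (min_le_left _ _)).trans (by gcongr)
  · calc min 1 (2 ^ r) * a ^ r ≤ 2 ^ r * a ^ r := by gcongr; exact min_le_right _ _
      _ = (2 * a) ^ r := (mul_rpow zero_le_two ha.le).symm
      _ ≤ s ^ r := rpow_le_rpow_of_nonpos (by linarith) hs hr

lemma innerIntegral_ge_of_window (hα : 0 < α) {a T : ℝ} (ha : 0 < a) (haT : 2 * a ≤ T) (y : Esp d) :
    min 1 (2 ^ (α - 1)) * a ^ α * (1 + 2 * a) ^ (-(d : ℝ)) * exp (-‖y‖ ^ 2 / (2 * (1 + a)))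
      ≤ innerIntegral d α T y := by
  set c := min 1 (2 ^ (α - 1)) * a ^ (α - 1) * (1 + 2 * a) ^ (-(d : ℝ))
    * exp (-‖y‖ ^ 2 / (2 * (1 + a)))
  have hlow : ∀ s ∈ Ioc a (2 * a), c ≤ integrand d α y s := by
    rintro s ⟨has, hs⟩
    have hs0 : 0 < s := ha.trans has
    unfold integrand
    gcongr ?_ * ?_ * exp ?_
    · exact min_one_two_rpow_mul_rpow_le _ ha has.le hs
    · exact rpow_le_rpow_of_nonpos (by linarith) (by linarith) (by simp)
    · have : 0 ≤ ‖y‖ ^ 2 := by positivity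
      rw [neg_div, neg_div, neg_le_neg_iff]
      gcongr
  calc min 1 (2 ^ (α - 1)) * a ^ α * (1 + 2 * a) ^ (-(d : ℝ)) * exp (-‖y‖ ^ 2 / (2 * (1 + a)))
      = (2 * a - a) * c := by
        simp only [c]
        rw [show α = (α - 1) + 1 by ring, rpow_add ha, rpow_one, add_sub_cancel_right]
        ring
    _ ≤ ∫ s in Ioc a (2 * a), integrand d α y s := by
        rw [← smul_eq_mul, ← Real.volume_real_Ioc_of_le (by linarith), ← setIntegral_const]
        exact setIntegral_mono_on (integrableOn_const (by simp))
          ((integrableOn_integrand hα y (by linarith)).mono_set (Ioc_subset_Ioc ha.le haT))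
          measurableSet_Ioc hlow
    _ ≤ innerIntegral d α T y :=
        setIntegral_mono_set (integrableOn_integrand hα y (by linarith))
          (ae_restrict_of_forall_mem measurableSet_Ioc fun _ hs => integrand_nonneg y hs.1.le)
          (Ioc_subset_Ioc ha.le haT).eventuallyLE

lemma exists_innerIntegral_ge (hα : 0 < α) :
    ∃ c : ℝ, 0 < c ∧ ∀ x T : ℝ, 1 ≤ x → x ≤ T → ∀ y : Esp d,
      c * x ^ (α - d) * exp (-‖y‖ ^ 2 / (2 + x)) ≤ innerIntegral d α T y := by
  refine ⟨min 1 (2 ^ (α - 1)) * 2 ^ (-α) * 2 ^ (-(d : ℝ)), by positivity,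
    fun x T hx hxT y => ?_⟩
  have hx0 : 0 < x := by linarith
  refine le_trans ?_ (innerIntegral_ge_of_window hα (half_pos hx0) (by linarith) y)
  have hd : (2 * x) ^ (-(d : ℝ)) ≤ (1 + 2 * (x / 2)) ^ (-(d : ℝ)) :=
    rpow_le_rpow_of_nonpos (by positivity) (by linarith) (by simp)
  calc min 1 (2 ^ (α - 1)) * 2 ^ (-α) * 2 ^ (-(d : ℝ)) * x ^ (α - d) * exp (-‖y‖ ^ 2 / (2 + x))
      = min 1 (2 ^ (α - 1)) * (x / 2) ^ α * (2 * x) ^ (-(d : ℝ))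
          * exp (-‖y‖ ^ 2 / (2 * (1 + x / 2))) := by
        have hsplit : x ^ (α - d) = x ^ α * x ^ (-(d : ℝ)) := by
          rw [← rpow_add hx0, sub_eq_add_neg]
        rw [hsplit, div_rpow hx0.le zero_le_two, mul_rpow zero_le_two hx0.le,
          rpow_neg zero_le_two α, show 2 * (1 + x / 2) = 2 + x by ring]
        ring
    _ ≤ _ := by gcongr

lemma exists_innerIntegral_ge_of_le (hα : 0 < α) (hαd : α ≤ d) :
    ∃ c : ℝ, 0 < c ∧ ∀ T : ℝ, 1 ≤ T → ∀ y : Esp d,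
      c * (1 + ‖y‖ ^ 2) ^ (α - d) * exp (-‖y‖ ^ 2 / (2 + T)) ≤ innerIntegral d α T y := by
  obtain ⟨c, hc, hlow⟩ := exists_innerIntegral_ge (d := d) hα
  refine ⟨c * exp (-1), by positivity, fun T hT y => ?_⟩
  have hu : 0 ≤ ‖y‖ ^ 2 := by positivity
  have hx : 1 ≤ min (1 + ‖y‖ ^ 2) T := le_min (by linarith) hT
  have hexp : -1 + -‖y‖ ^ 2 / (2 + T) ≤ -‖y‖ ^ 2 / (2 + min (1 + ‖y‖ ^ 2) T) := by
    rcases min_cases (1 + ‖y‖ ^ 2) T with ⟨hx, -⟩ | ⟨hx, -⟩ <;> rw [hx]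
    · have : ‖y‖ ^ 2 / (2 + (1 + ‖y‖ ^ 2)) ≤ 1 := by rw [div_le_one (by positivity)]; linarith
      have : 0 ≤ ‖y‖ ^ 2 / (2 + T) := by positivity
      rw [neg_div, neg_div]
      linarith
    · linarith
  calc c * exp (-1) * (1 + ‖y‖ ^ 2) ^ (α - d) * exp (-‖y‖ ^ 2 / (2 + T))
      = c * (1 + ‖y‖ ^ 2) ^ (α - d) * exp (-1 + -‖y‖ ^ 2 / (2 + T)) := by
        rw [exp_add]; ring
    _ ≤ c * min (1 + ‖y‖ ^ 2) T ^ (α - d) * exp (-‖y‖ ^ 2 / (2 + min (1 + ‖y‖ ^ 2) T)) := by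
        gcongr c * ?_ * exp ?_
        exact rpow_le_rpow_of_nonpos (zero_lt_one.trans_le hx) (min_le_left _ _) (sub_nonpos.2 hαd)
    _ ≤ innerIntegral d α T y := hlow _ T hx (min_le_right _ _) y

lemma innerIntegral_le_of_lt (hαd : (d : ℝ) < α) {T : ℝ} (hT : 1 ≤ T) (y : Esp d) :
    innerIntegral d α T y
      ≤ (1 / α + 1 / (α - d)) * T ^ (α - d) * exp (-‖y‖ ^ 2 / (2 * (1 + T))) := by
  have hα : 0 < α := lt_of_le_of_lt (Nat.cast_nonneg d) hαd
  have hmono : ∀ s ∈ Ioc 0 T, integrand d α y s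
      ≤ s ^ (α - 1) * (1 + s) ^ (-(d : ℝ)) * exp (-‖y‖ ^ 2 / (2 * (1 + T))) := by
    rintro s ⟨hs0, hsT⟩
    have : 0 ≤ ‖y‖ ^ 2 := by positivity
    unfold integrand
    gcongr _ * exp ?_
    rw [neg_div, neg_div, neg_le_neg_iff]
    gcongr
  calc innerIntegral d α T y
      ≤ ∫ s in Ioc 0 T, s ^ (α - 1) * (1 + s) ^ (-(d : ℝ)) * exp (-‖y‖ ^ 2 / (2 * (1 + T))) :=
        setIntegral_mono_on (integrableOn_integrand hα y (by linarith))
          ((integrableOn_rpow_mul_one_add_rpow _ (by linarith) (by linarith)).mul_const _)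
          measurableSet_Ioc hmono
    _ = (∫ s in Ioc 0 T, s ^ (α - 1) * (1 + s) ^ (-(d : ℝ)))
          * exp (-‖y‖ ^ 2 / (2 * (1 + T))) := integral_mul_const _ _
    _ ≤ _ := by
        gcongr
        exact setIntegral_rpow_mul_one_add_rpow_le hα (Nat.cast_nonneg d) (by linarith) le_rfl hT

lemma exists_outerLIntegral_ge (hα : 0 < α) {θ : ℝ} (hθ : 0 ≤ θ) :
    ∃ c : ℝ, 0 < c ∧ ∀ T : ℝ, 1 ≤ T →
      ENNReal.ofReal (c * T ^ (θ * (α - d) + d / 2)) ≤ outerLIntegral d α θ T := by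
  obtain ⟨c, hc, hlow⟩ := exists_innerIntegral_ge (d := d) hα
  set V := (volume (ball (0 : Esp d) 1)).toReal
  have hV : 0 < V := ENNReal.toReal_pos (measure_ball_pos volume 0 one_pos).ne'
    measure_ball_lt_top.ne
  refine ⟨(c * exp (-1)) ^ θ * V, by positivity, fun T hT => ?_⟩
  have hT0 : 0 < T := by linarith
  have hball : ∀ y ∈ ball (0 : Esp d) (√T),
      (c * exp (-1) * T ^ (α - d)) ^ θ ≤ innerIntegral d α T y ^ θ := by
    intro y hy
    rw [mem_ball_zero_iff, ← sq_lt_sq₀ (norm_nonneg _) (sqrt_nonneg _), sq_sqrt hT0.le] at hy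
    refine rpow_le_rpow (by positivity) (le_trans ?_ (hlow T T hT le_rfl y)) hθ
    rw [mul_right_comm]
    gcongr
    rw [neg_div, neg_le_neg_iff, div_le_one (by linarith)]
    linarith
  have hvol : volume (ball (0 : Esp d) (√T)) = ENNReal.ofReal (T ^ ((d : ℝ) / 2) * V) := by
    rw [Measure.addHaar_ball_of_pos _ _ (sqrt_pos.2 hT0), finrank_euclideanSpace_fin,
      ENNReal.ofReal_mul (by positivity), ENNReal.ofReal_toReal measure_ball_lt_top.ne,
      sqrt_eq_rpow, ← rpow_natCast, ← rpow_mul hT0.le, one_div_mul_eq_div]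
  calc ENNReal.ofReal ((c * exp (-1)) ^ θ * V * T ^ (θ * (α - d) + d / 2))
      = ∫⁻ _ in ball (0 : Esp d) (√T), ENNReal.ofReal ((c * exp (-1) * T ^ (α - d)) ^ θ) := by
        rw [setLIntegral_const, hvol, ← ENNReal.ofReal_mul (by positivity),
          mul_rpow (x := c * exp (-1)) (by positivity) (by positivity), ← rpow_mul hT0.le,
          rpow_add hT0, mul_comm (α - d) θ]
        congr 1
        ring
    _ ≤ ∫⁻ y in ball (0 : Esp d) (√T), ENNReal.ofReal (innerIntegral d α T y ^ θ) :=
        setLIntegral_mono' measurableSet_ball fun y hy => ENNReal.ofReal_le_ofReal (hball y hy)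
    _ ≤ outerLIntegral d α θ T := setLIntegral_le_lintegral _ _

lemma exists_outerLIntegral_le_of_lt (hαd : (d : ℝ) < α) {θ : ℝ} (hθ : 0 < θ) :
    ∃ C : ℝ, 0 < C ∧ ∀ T : ℝ, 1 ≤ T →
      outerLIntegral d α θ T ≤ ENNReal.ofReal (C * T ^ (θ * (α - d) + d / 2)) := by
  have hα : 0 < α := lt_of_le_of_lt (Nat.cast_nonneg d) hαd
  set A := 1 / α + 1 / (α - d)
  have hA : 0 < A := by have := sub_pos.2 hαd; positivity
  refine ⟨A ^ θ * (4 * π / θ) ^ ((d : ℝ) / 2), by positivity, fun T hT => ?_⟩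
  have hT0 : 0 < T := by linarith
  have hpt : ∀ y : Esp d, innerIntegral d α T y ^ θ
      ≤ (A * T ^ (α - d)) ^ θ * exp (-(θ / (2 * (1 + T))) * ‖y‖ ^ 2) := by
    intro y
    refine (rpow_le_rpow (innerIntegral_nonneg T y) (innerIntegral_le_of_lt hαd hT y)
      hθ.le).trans_eq ?_
    rw [mul_rpow (by positivity) (exp_pos _).le, ← exp_mul]
    congr 2
    ring
  calc outerLIntegral d α θ T
      ≤ ∫⁻ y : Esp d, ENNReal.ofReal ((A * T ^ (α - d)) ^ θ)
          * ENNReal.ofReal (exp (-(θ / (2 * (1 + T))) * ‖y‖ ^ 2)) :=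
        lintegral_mono fun y => by
          rw [← ENNReal.ofReal_mul (by positivity)]
          exact ENNReal.ofReal_le_ofReal (hpt y)
    _ = ENNReal.ofReal ((A * T ^ (α - d)) ^ θ * (2 * π / θ * (1 + T)) ^ ((d : ℝ) / 2)) := by
        rw [lintegral_const_mul' _ _ ENNReal.ofReal_ne_top,
          lintegral_exp_neg_mul_norm_sq (by positivity), finrank_euclideanSpace_fin,
          ← ENNReal.ofReal_mul (by positivity)]
        congr 3
        field_simp
    _ ≤ ENNReal.ofReal ((A * T ^ (α - d)) ^ θ * (4 * π / θ * T) ^ ((d : ℝ) / 2)) := by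
        rw [show 4 * π / θ * T = 2 * π / θ * (2 * T) by ring]
        gcongr
        linarith
    _ = ENNReal.ofReal (A ^ θ * (4 * π / θ) ^ ((d : ℝ) / 2) * T ^ (θ * (α - d) + d / 2)) := by
        rw [mul_rpow hA.le (by positivity), mul_rpow (by positivity) hT0.le, ← rpow_mul hT0.le,
          rpow_add hT0]
        ring_nf

def holderWeight (d : ℕ) (α θ s : ℝ) : ℝ :=
  s ^ (α - 1) * (1 + s) ^ (-(d - d / (2 * θ)))

lemma lintegral_ofReal_integrand_rpow {θ : ℝ} (hθ : 0 < θ) {s : ℝ} (hs : 0 ≤ s) :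
    ∫⁻ y : Esp d, ENNReal.ofReal (integrand d α y s ^ θ)
      = ENNReal.ofReal ((s ^ (α - 1) * (1 + s) ^ (-(d : ℝ))) ^ θ
          * (2 * π / θ * (1 + s)) ^ ((d : ℝ) / 2)) := by
  have hpt : ∀ y : Esp d, integrand d α y s ^ θ
      = (s ^ (α - 1) * (1 + s) ^ (-(d : ℝ))) ^ θ * exp (-(θ / (2 * (1 + s))) * ‖y‖ ^ 2) := by
    intro y
    unfold integrand
    rw [mul_rpow (by positivity) (exp_pos _).le, ← exp_mul]
    congr 2
    ring
  simp_rw [hpt, ENNReal.ofReal_mul (by positivity : 0 ≤ (s ^ (α - 1) * (1 + s) ^ (-(d : ℝ))) ^ θ)]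
  rw [lintegral_const_mul' _ _ ENNReal.ofReal_ne_top,
    lintegral_exp_neg_mul_norm_sq (by positivity), finrank_euclideanSpace_fin]
  congr 3
  field_simp

lemma lintegral_ofReal_integrand_rpow_mul_holderWeight {θ s : ℝ} (hθ : 0 < θ) (hs : 0 < s) :
    ∫⁻ y : Esp d, ENNReal.ofReal (integrand d α y s) ^ θ
        * ENNReal.ofReal (holderWeight d α θ s) ^ (1 - θ)
      = ENNReal.ofReal ((2 * π / θ) ^ ((d : ℝ) / 2) * holderWeight d α θ s) := by
  have hw : 0 < holderWeight d α θ s := by unfold holderWeight; positivity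
  simp_rw [ENNReal.ofReal_rpow_of_nonneg (integrand_nonneg _ hs.le) hθ.le,
    ENNReal.ofReal_rpow_of_pos hw]
  rw [lintegral_mul_const' _ _ ENNReal.ofReal_ne_top, lintegral_ofReal_integrand_rpow hθ hs.le,
    ← ENNReal.ofReal_mul (by positivity)]
  congr 1
  set δ : ℝ := d - d / (2 * θ)
  -- `δ` is chosen so that the powers of `1 + s` collapse to `(1 + s) ^ (-δ)`
  have hpow_s : (s ^ (α - 1)) ^ θ * (s ^ (α - 1)) ^ (1 - θ) = s ^ (α - 1) := by
    rw [← rpow_add (by positivity)]; simp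
  have hpow_1s : ((1 + s) ^ (-(d : ℝ))) ^ θ * (1 + s) ^ ((d : ℝ) / 2)
      * ((1 + s) ^ (-δ)) ^ (1 - θ) = (1 + s) ^ (-δ) := by
    rw [← rpow_mul (by positivity), ← rpow_mul (by positivity), ← rpow_add (by positivity),
      ← rpow_add (by positivity)]
    congr 1
    simp only [δ]
    field_simp
    ring
  simp only [holderWeight]
  rw [mul_rpow (by positivity) (by positivity), mul_rpow (by positivity) (by positivity),
    mul_rpow (by positivity) (by positivity)]
  linear_combination (2 * π / θ) ^ ((d : ℝ) / 2) * (((1 + s) ^ (-(d : ℝ))) ^ θ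
    * (1 + s) ^ ((d : ℝ) / 2) * ((1 + s) ^ (-δ)) ^ (1 - θ)) * hpow_s
    + (2 * π / θ) ^ ((d : ℝ) / 2) * s ^ (α - 1) * hpow_1s

lemma ofReal_innerIntegral_rpow_le (hα : 0 < α) {θ T : ℝ} (hθ : 1 ≤ θ) (hT : 0 ≤ T) (y : Esp d) :
    ENNReal.ofReal (innerIntegral d α T y ^ θ)
      ≤ (∫⁻ s in Ioc 0 T, ENNReal.ofReal (integrand d α y s) ^ θ
            * ENNReal.ofReal (holderWeight d α θ s) ^ (1 - θ))
          * (∫⁻ s in Ioc 0 T, ENNReal.ofReal (holderWeight d α θ s)) ^ (θ - 1) := by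
  rw [← ENNReal.ofReal_rpow_of_nonneg (innerIntegral_nonneg T y) (by linarith),
    ofReal_innerIntegral hα hT]
  refine lintegral_rpow_le_lintegral_mul_rpow
    (measurable_integrand_uncurry.comp measurable_prodMk_left).ennreal_ofReal.aemeasurable
    (by unfold holderWeight; fun_prop)
    (ae_restrict_of_forall_mem measurableSet_Ioc fun s hs => ?_)
    (ae_of_all _ fun _ => ENNReal.ofReal_ne_top) hθ
  have := hs.1
  unfold holderWeight
  exact (ENNReal.ofReal_pos.2 (by positivity)).ne'

lemma exists_outerLIntegral_le_of_one_le {θ : ℝ} (hθ : 1 ≤ θ) (hE : 0 < θ * (α - d) + d / 2) :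
    ∃ C : ℝ, 0 < C ∧ ∀ T : ℝ, 1 ≤ T →
      outerLIntegral d α θ T ≤ ENNReal.ofReal (C * T ^ (θ * (α - d) + d / 2)) := by
  have hθ0 : 0 < θ := by linarith
  set E := θ * (α - d) + d / 2
  have hδ : 0 ≤ (d : ℝ) - d / (2 * θ) :=
    sub_nonneg.2 (div_le_self (Nat.cast_nonneg d) (by linarith))
  have hαδ : α - (d - d / (2 * θ)) = E / θ := by simp only [E]; field_simp; ring
  have hα : 0 < α := by have := div_pos hE hθ0; linarith
  set A := 1 / α + 1 / (E / θ)
  set K := (2 * π / θ) ^ ((d : ℝ) / 2)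
  refine ⟨K * A ^ θ, by positivity, fun T hT => ?_⟩
  have hT0 : 0 < T := by linarith
  set W := ∫⁻ s in Ioc 0 T, ENNReal.ofReal (holderWeight d α θ s)
  have hW : W ≤ ENNReal.ofReal (A * T ^ (E / θ)) :=
    lintegral_rpow_mul_one_add_rpow_le hα hδ (div_pos hE hθ0) hαδ.le hT
  have hjoint : Measurable fun z : Esp d × ℝ =>
      ENNReal.ofReal (integrand d α z.1 z.2) ^ θ
        * ENNReal.ofReal (holderWeight d α θ z.2) ^ (1 - θ) :=
    (measurable_integrand_uncurry.ennreal_ofReal.pow_const θ).mul (by unfold holderWeight; fun_prop)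
  have hB : 0 ≤ A * T ^ (E / θ) := by positivity
  calc outerLIntegral d α θ T
      ≤ ∫⁻ y : Esp d, (∫⁻ s in Ioc 0 T, ENNReal.ofReal (integrand d α y s) ^ θ
          * ENNReal.ofReal (holderWeight d α θ s) ^ (1 - θ)) * W ^ (θ - 1) :=
        lintegral_mono (ofReal_innerIntegral_rpow_le hα hθ hT0.le)
    _ = (∫⁻ s in Ioc 0 T, ∫⁻ y : Esp d, ENNReal.ofReal (integrand d α y s) ^ θ
          * ENNReal.ofReal (holderWeight d α θ s) ^ (1 - θ)) * W ^ (θ - 1) := by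
        rw [lintegral_mul_const' _ _ (ENNReal.rpow_ne_top_of_nonneg (by linarith)
          (hW.trans_lt ENNReal.ofReal_lt_top).ne), lintegral_lintegral_swap hjoint.aemeasurable]
    _ = ENNReal.ofReal K * W * W ^ (θ - 1) := by
        rw [setLIntegral_congr_fun measurableSet_Ioc fun s hs =>
          lintegral_ofReal_integrand_rpow_mul_holderWeight hθ0 hs.1]
        simp_rw [ENNReal.ofReal_mul (by positivity : (0 : ℝ) ≤ (2 * π / θ) ^ ((d : ℝ) / 2))]
        rw [lintegral_const_mul _ (by unfold holderWeight; fun_prop)]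
    _ ≤ ENNReal.ofReal K * ENNReal.ofReal (A * T ^ (E / θ))
          * ENNReal.ofReal (A * T ^ (E / θ)) ^ (θ - 1) := by
        gcongr
    _ = ENNReal.ofReal (K * A ^ θ * T ^ E) := by
        rw [ENNReal.ofReal_rpow_of_nonneg hB (by linarith), ← ENNReal.ofReal_mul (by positivity),
          ← ENNReal.ofReal_mul (by positivity), mul_assoc, ← rpow_one_add' hB (by linarith),
          add_sub_cancel, mul_rpow (by positivity) (by positivity), ← rpow_mul hT0.le,
          div_mul_cancel₀ _ hθ0.ne', mul_assoc]

lemma rpow_le_mul_rpow_sub_one {x g θ : ℝ} (hg : 0 < g) (hgx : g ≤ x) (hθ : θ ≤ 1) :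
    x ^ θ ≤ x * g ^ (θ - 1) := by
  have hx : 0 < x := hg.trans_le hgx
  calc x ^ θ = x ^ (1 + (θ - 1)) := by ring_nf
    _ = x * x ^ (θ - 1) := by rw [rpow_add hx, rpow_one]
    _ ≤ x * g ^ (θ - 1) :=
        mul_le_mul_of_nonneg_left (rpow_le_rpow_of_nonpos hg hgx (sub_nonpos.2 hθ)) hx.le

lemma lintegral_ofReal_innerIntegral_mul (hα : 0 < α) {T : ℝ} (hT : 0 ≤ T)
    {g : Esp d → ℝ≥0∞} (hg : Measurable g) :
    ∫⁻ y, ENNReal.ofReal (innerIntegral d α T y) * g y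
      = ∫⁻ s in Ioc 0 T, ∫⁻ y, ENNReal.ofReal (integrand d α y s) * g y := by
  simp_rw [ofReal_innerIntegral hα hT]
  rw [← lintegral_lintegral_swap
    (measurable_integrand_uncurry.ennreal_ofReal.mul (hg.comp measurable_fst)).aemeasurable]
  refine lintegral_congr fun y => (lintegral_mul_const _ ?_).symm
  exact (measurable_integrand_uncurry.comp measurable_prodMk_left).ennreal_ofReal

lemma integrand_mul_rpow_le {θ c T s : ℝ} (hθ : θ ≤ 1) (hc : 0 < c) (hs : 0 < s) (hsT : s ≤ T)
    (y : Esp d) :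
    integrand d α y s * (c * (1 + ‖y‖ ^ 2) ^ (α - d) * exp (-‖y‖ ^ 2 / (2 + T))) ^ (θ - 1)
      ≤ c ^ (θ - 1) * (s ^ (α - 1) * (1 + s) ^ (-(d : ℝ)))
          * ((1 + ‖y‖ ^ 2) ^ ((d - α) * (1 - θ)) * exp (-((θ - 1 / 2) / (1 + s)) * ‖y‖ ^ 2)) := by
  set u := ‖y‖ ^ 2
  have hu : 0 ≤ u := by positivity
  have hpow : (c * (1 + u) ^ (α - d) * exp (-u / (2 + T))) ^ (θ - 1)
      = c ^ (θ - 1) * (1 + u) ^ ((d - α) * (1 - θ)) * exp ((1 - θ) * u / (2 + T)) := by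
    rw [mul_rpow (by positivity) (exp_pos _).le, mul_rpow hc.le (by positivity),
      ← rpow_mul (by positivity), ← exp_mul, show (α - d) * (θ - 1) = (d - α) * (1 - θ) by ring,
      show -u / (2 + T) * (θ - 1) = (1 - θ) * u / (2 + T) by ring]
  have hexp : -u / (2 * (1 + s)) + (1 - θ) * u / (2 + T) ≤ -((θ - 1 / 2) / (1 + s)) * u := by
    have hle : (1 - θ) * u / (2 + T) ≤ (1 - θ) * u / (1 + s) :=
      div_le_div_of_nonneg_left (mul_nonneg (by linarith) hu) (by positivity) (by linarith)
    have heq : -((θ - 1 / 2) / (1 + s)) * u = -u / (2 * (1 + s)) + (1 - θ) * u / (1 + s) := by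
      field_simp
      ring
    linarith
  calc integrand d α y s * (c * (1 + u) ^ (α - d) * exp (-u / (2 + T))) ^ (θ - 1)
      = c ^ (θ - 1) * (s ^ (α - 1) * (1 + s) ^ (-(d : ℝ))) * ((1 + u) ^ ((d - α) * (1 - θ))
          * exp (-u / (2 * (1 + s)) + (1 - θ) * u / (2 + T))) := by
        rw [hpow, exp_add]
        unfold integrand
        ring
    _ ≤ _ := by gcongr

lemma exists_lintegral_integrand_mul_rpow_le {θ c : ℝ} (hθ : 1 / 2 < θ) (hθ1 : θ ≤ 1)
    (hαd : α ≤ d) (hc : 0 < c) :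
    ∃ K : ℝ, 0 < K ∧ ∀ T s : ℝ, 0 < s → s ≤ T →
      ∫⁻ y : Esp d, ENNReal.ofReal (integrand d α y s)
          * ENNReal.ofReal ((c * (1 + ‖y‖ ^ 2) ^ (α - d) * exp (-‖y‖ ^ 2 / (2 + T))) ^ (θ - 1))
        ≤ ENNReal.ofReal (K * (s ^ (α - 1) * (1 + s) ^ (-(d / 2 - (d - α) * (1 - θ))))) := by
  set κ := (d - α) * (1 - θ)
  obtain ⟨K, hK, hgauss⟩ := exists_lintegral_one_add_norm_sq_rpow_mul_exp_le (V := Esp d)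
    (mul_nonneg (by linarith) (by linarith) : 0 ≤ κ) (c := θ - 1 / 2) (by linarith)
  rw [finrank_euclideanSpace_fin] at hgauss
  refine ⟨c ^ (θ - 1) * K, by positivity, fun T s hs hsT => ?_⟩
  have hcollect :
      (1 + s) ^ (-(d : ℝ)) * (1 + s) ^ (κ + d / 2) = (1 + s) ^ (-((d : ℝ) / 2 - κ)) := by
    rw [← rpow_add (by linarith)]
    ring_nf
  calc ∫⁻ y : Esp d, ENNReal.ofReal (integrand d α y s)
        * ENNReal.ofReal ((c * (1 + ‖y‖ ^ 2) ^ (α - d) * exp (-‖y‖ ^ 2 / (2 + T))) ^ (θ - 1))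
      ≤ ∫⁻ y, ENNReal.ofReal (c ^ (θ - 1) * (s ^ (α - 1) * (1 + s) ^ (-(d : ℝ))))
          * ENNReal.ofReal ((1 + ‖y‖ ^ 2) ^ κ * exp (-((θ - 1 / 2) / (1 + s)) * ‖y‖ ^ 2)) :=
        lintegral_mono fun y => by
          rw [← ENNReal.ofReal_mul (integrand_nonneg y hs.le), ← ENNReal.ofReal_mul (by positivity)]
          exact ENNReal.ofReal_le_ofReal (integrand_mul_rpow_le hθ1 hc hs hsT y)
    _ ≤ ENNReal.ofReal (c ^ (θ - 1) * (s ^ (α - 1) * (1 + s) ^ (-(d : ℝ))))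
          * ENNReal.ofReal (K * (1 + s) ^ (κ + d / 2)) := by
        rw [lintegral_const_mul' _ _ ENNReal.ofReal_ne_top]
        gcongr
        exact hgauss (1 + s) (by linarith)
    _ = _ := by
        rw [← ENNReal.ofReal_mul (by positivity)]
        congr 1
        linear_combination (c ^ (θ - 1) * s ^ (α - 1) * K) * hcollect

lemma exists_outerLIntegral_le_of_lt_one {θ : ℝ} (hθ : 1 / 2 < θ) (hθ1 : θ < 1) (hαd : α ≤ d)
    (hE : 0 < θ * (α - d) + d / 2) :
    ∃ C : ℝ, 0 < C ∧ ∀ T : ℝ, 1 ≤ T →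
      outerLIntegral d α θ T ≤ ENNReal.ofReal (C * T ^ (θ * (α - d) + d / 2)) := by
  set E := θ * (α - d) + d / 2
  have hα : 0 < α := by
    have := mul_nonneg (by linarith : (0 : ℝ) ≤ θ - 1 / 2) (Nat.cast_nonneg d : (0 : ℝ) ≤ d)
    have : 0 < θ * α := by linarith [show E = θ * (α - d) + d / 2 from rfl]
    exact pos_of_mul_pos_right this (by linarith)
  obtain ⟨c, hc, hG⟩ := exists_innerIntegral_ge_of_le (d := d) hα hαd
  obtain ⟨K, hK, hslice⟩ := exists_lintegral_integrand_mul_rpow_le (d := d) hθ hθ1.le hαd hc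
  set A := 1 / α + 1 / E
  refine ⟨K * A, by positivity, fun T hT => ?_⟩
  have hT0 : 0 < T := by linarith
  set G : Esp d → ℝ := fun y => c * (1 + ‖y‖ ^ 2) ^ (α - d) * exp (-‖y‖ ^ 2 / (2 + T))
  calc outerLIntegral d α θ T
      ≤ ∫⁻ y, ENNReal.ofReal (innerIntegral d α T y) * ENNReal.ofReal (G y ^ (θ - 1)) :=
        lintegral_mono fun y => by
          rw [← ENNReal.ofReal_mul (innerIntegral_nonneg T y)]
          exact ENNReal.ofReal_le_ofReal
            (rpow_le_mul_rpow_sub_one (by positivity) (hG T hT y) hθ1.le)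
    _ = ∫⁻ s in Ioc 0 T, ∫⁻ y,
          ENNReal.ofReal (integrand d α y s) * ENNReal.ofReal (G y ^ (θ - 1)) :=
        lintegral_ofReal_innerIntegral_mul hα hT0.le (by simp only [G]; fun_prop)
    _ ≤ ∫⁻ s in Ioc 0 T, ENNReal.ofReal K
          * ENNReal.ofReal (s ^ (α - 1) * (1 + s) ^ (-(d / 2 - (d - α) * (1 - θ)))) :=
        setLIntegral_mono' measurableSet_Ioc fun s hs =>
          (hslice T s hs.1 hs.2).trans_eq (ENNReal.ofReal_mul hK.le)
    _ ≤ ENNReal.ofReal K * ENNReal.ofReal (A * T ^ E) := by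
        rw [lintegral_const_mul' _ _ ENNReal.ofReal_ne_top]
        gcongr
        exact lintegral_rpow_mul_one_add_rpow_le hα (by nlinarith) hE
          (by simp only [E]; linarith) hT
    _ = ENNReal.ofReal (K * A * T ^ E) := by
        rw [← ENNReal.ofReal_mul hK.le, mul_assoc]

lemma exists_outerLIntegral_le {θ : ℝ} (hθ : 1 / 2 < θ) (hE : 0 < θ * (α - d) + d / 2) :
    ∃ C : ℝ, 0 < C ∧ ∀ T : ℝ, 1 ≤ T →
      outerLIntegral d α θ T ≤ ENNReal.ofReal (C * T ^ (θ * (α - d) + d / 2)) := by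
  rcases le_or_gt 1 θ with hθ1 | hθ1
  · exact exists_outerLIntegral_le_of_one_le hθ1 hE
  rcases le_or_gt α d with hαd | hαd
  · exact exists_outerLIntegral_le_of_lt_one hθ hθ1 hαd hE
  · exact exists_outerLIntegral_le_of_lt hαd (by linarith)

lemma rpow_mul_SB0_mem_Icc {p E c C : ℝ} (hC : 0 < C)
    (hlow : ∀ T : ℝ, 1 ≤ T → ENNReal.ofReal (c * T ^ E) ≤ outerLIntegral d α (p / 2) T)
    (hup : ∀ T : ℝ, 1 ≤ T → outerLIntegral d α (p / 2) T ≤ ENNReal.ofReal (C * T ^ E))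
    {ε : ℝ} (hε : 0 < ε) (hε1 : ε ≤ 1) :
    ε ^ E * SB0 d α p ε ∈ Icc c C := by
  have hT : 1 ≤ 1 / ε := by rw [le_div_iff₀ hε]; linarith
  have hscale : ε ^ E * (1 / ε) ^ E = 1 := by
    rw [← mul_rpow hε.le (by positivity), mul_one_div_cancel hε.ne', one_rpow]
  have hεE : 0 < ε ^ E := by positivity
  rw [SB0_eq_toReal_outerLIntegral]
  constructor
  · have hfin := ((hup _ hT).trans_lt ENNReal.ofReal_lt_top).ne
    calc c = ε ^ E * (c * (1 / ε) ^ E) := by linear_combination -c * hscale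
      _ ≤ _ := by gcongr; exact (ENNReal.ofReal_le_iff_le_toReal hfin).1 (hlow _ hT)
  · calc ε ^ E * (outerLIntegral d α (p / 2) (1 / ε)).toReal ≤ ε ^ E * (C * (1 / ε) ^ E) := by
          gcongr; exact ENNReal.toReal_le_of_le_ofReal (by positivity) (hup _ hT)
      _ = C := by linear_combination C * hscale

end SB0

theorem SB0_bounds_supercritical_general
    (d : ℕ) (p α : ℝ) (hp : 1 < p) (hα : (d : ℝ) / (p / (p - 1)) < α) :
    ∃ c C : ℝ, 0 < c ∧ c ≤ C ∧ ∃ ε₀ : ℝ, 0 < ε₀ ∧ ∀ ε : ℝ, 0 < ε → ε < ε₀ →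
      c ≤ ε ^ (p * (α - (d : ℝ) / (p / (p - 1))) / 2) * SB0 d α p ε ∧
      ε ^ (p * (α - (d : ℝ) / (p / (p - 1))) / 2) * SB0 d α p ε ≤ C := by
  have hp1 : 0 < p - 1 := by linarith
  have hE : p * (α - d / (p / (p - 1))) / 2 = p / 2 * (α - d) + d / 2 := by
    field_simp
    ring
  have hEpos : 0 < p / 2 * (α - d) + d / 2 := by
    rw [← hE]; have := sub_pos.2 hα; positivity
  have hα0 : 0 < α := lt_of_le_of_lt (by positivity) hα
  obtain ⟨C, hC, hup⟩ := SB0.exists_outerLIntegral_le (by linarith) hEpos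
  obtain ⟨c, hc, hlow⟩ := SB0.exists_outerLIntegral_ge (d := d) hα0 (θ := p / 2) (by positivity)
  refine ⟨c, max C c, hc, le_max_right _ _, 1, one_pos, fun ε hε hε1 => ?_⟩
  rw [hE]
  obtain ⟨hl, hu⟩ := SB0.rpow_mul_SB0_mem_Icc hC hlow hup hε hε1.le
  exact ⟨hl, hu.trans (le_max_left _ _)⟩

/-- Supercritical two-sided bound for `𝒮𝓑₀` for small `ε`. -/
theorem SB0_bounds_supercritical
    (d : ℕ) (hd : 1 ≤ d) (p α : ℝ) (hp : 1 < p) (hα : (d : ℝ) / (p / (p - 1)) < α) :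
    ∃ c C : ℝ, 0 < c ∧ c ≤ C ∧ ∃ ε₀ : ℝ, 0 < ε₀ ∧ ∀ ε : ℝ, 0 < ε → ε < ε₀ →
      c ≤ ε ^ (p * (α - (d : ℝ) / (p / (p - 1))) / 2) * SB0 d α p ε ∧
      ε ^ (p * (α - (d : ℝ) / (p / (p - 1))) / 2) * SB0 d α p ε ≤ C :=
  SB0_bounds_supercritical_general d p α hp hα

end
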